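/- Adversarial removal (Lemma on retraining probability, adversarial case): let X be a set of n distinct points in ℝ^d with n ≥ K ≥ 1, let ε1 > 0 and ε2 ≥ 1, fix C* and a* as in the optimal-clustering setup, and let X_R ⊆ X be a set of R points such that every x ∈ X_R is not an ε2-outlier and its optimal cluster satisfies |P_x| ≥ 2 and |P_x| ≥ n/(K·ε1). Let C = {c_1,…,c_K} be the random set of centroids produced by K-means++ initialization with parameter K on X. Then P(X_R ∩ C ≠ ∅) ≤ R·(1 + 20·K·(K−1)·ε1·ε2)/n. -/

import Mathlib

open scoped BigOperators Classical

noncomputable section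

abbrev Pt (d : ℕ) := EuclideanSpace ℝ (Fin d)

variable {d : ℕ}

/-- Distance from a point to a finite set of centroids (`0` if the set is empty). -/
def dSet (x : Pt d) (C : Finset (Pt d)) : ℝ :=
  if h : C.Nonempty then C.inf' h fun c => dist x c else 0

/-- `K`-means cost of a multiset of points w.r.t. a finite centroid set. -/
def kcost (X : Multiset (Pt d)) (C : Finset (Pt d)) : ℝ :=
  (X.map fun x => dSet x C ^ 2).sum

/-- Optimal `K`-means objective. -/
def optCost (K : ℕ) (X : Multiset (Pt d)) : ℝ :=
  sInf {v | ∃ C : Finset (Pt d), C.Nonempty ∧ C.card ≤ K ∧ v = kcost X C}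

/-- Set of entries of the tuple `c` with index `< j`. -/
def prefSet {K : ℕ} (c : Fin K → Pt d) (j : Fin K) : Finset (Pt d) :=
  (Finset.univ.filter fun i => i < j).image c

/-- Probability of picking `c j` as the `j`-th centroid in K-means++ initialization on `X`,
given that the previous centroids are the entries of `c` with index `< j`. -/
def stepProb (X : Multiset (Pt d)) {K : ℕ} (c : Fin K → Pt d) (j : Fin K) : ℝ :=
  if (j : ℕ) = 0 then (X.count (c j) : ℝ) / (Multiset.card X : ℝ)
  else (X.count (c j) : ℝ) * dSet (c j) (prefSet c j) ^ 2 / kcost X (prefSet c j)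

/-- PMF of K-means++ initialization with parameter `K` on the multiset `X`,
as a function on `K`-tuples of points. -/
def kmppProb (X : Multiset (Pt d)) {K : ℕ} (c : Fin K → Pt d) : ℝ :=
  ∏ j : Fin K, stepProb X c j

/-- Tuples with all entries in the finite set `X`. -/
def tupleSupp (X : Finset (Pt d)) (K : ℕ) : Finset (Fin K → Pt d) :=
  Fintype.piFinset fun _ => X

/-- The nearest centroid among the entries of `c` to `x`, ties broken by smallest index
(junk value `x` when `K = 0`). -/
def assignPt {K : ℕ} (c : Fin K → Pt d) (x : Pt d) : Pt d :=
  if h : (Finset.univ.filter fun j : Fin K => ∀ i, dist x (c j) ≤ dist x (c i)).Nonempty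
  then c ((Finset.univ.filter fun j : Fin K => ∀ i, dist x (c j) ≤ dist x (c i)).min' h)
  else x

/-!
By the union bound over the `K` seeding steps, it suffices to bound, whatever the centroids `C`
chosen so far, the probability that a given `x ∈ X_R` is picked next. For the first centroid
this is `1/n`. Afterwards, let `a` be the optimal centre of the cluster `P` of `x`. Combining
`d(x,C)² ≤ 2‖x - a‖² + 2 d(a,C)²` with `d(a,C)² ≤ 2‖y - a‖² + 2 d(y,C)²` averaged over `y ∈ P`
gives `|P| d(x,C)² ≤ 2|P| ‖x - a‖² + 4 Σ_P ‖y - a‖² + 4 Σ_P d(y,C)² ≤ 10 ε2 φ(X;C)`: the first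
term by the non-outlier condition, the second because the cost of `P` around `a` is part of the
optimal cost `φ*_K(X) ≤ φ(X;C)`, the third because `P ⊆ X`. Since `|P| ≥ n/(K ε1)`, the
probability `d(x,C)²/φ(X;C)` is at most `10 K ε1 ε2 / n`.
-/

open Finset

lemma dSet_nonneg (x : Pt d) (C : Finset (Pt d)) : 0 ≤ dSet x C := by
  unfold dSet
  split_ifs with hC
  · exact le_inf' hC _ fun _ _ => dist_nonneg
  · exact le_rfl

lemma dSet_le_dist {x c : Pt d} {C : Finset (Pt d)} (hc : c ∈ C) : dSet x C ≤ dist x c := by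
  rw [dSet, dif_pos ⟨c, hc⟩]
  exact inf'_le _ hc

lemma dSet_pos {x : Pt d} {C : Finset (Pt d)} (hC : C.Nonempty) (hx : x ∉ C) : 0 < dSet x C := by
  rw [dSet, dif_pos hC, lt_inf'_iff]
  exact fun c hc => dist_pos.mpr fun h => hx (h ▸ hc)

lemma dSet_le_dist_add_dSet (x y : Pt d) {C : Finset (Pt d)} (hC : C.Nonempty) :
    dSet x C ≤ dist x y + dSet y C := by
  obtain ⟨c, hc, hyc⟩ := exists_mem_eq_inf' hC (dist y ·)
  calc dSet x C ≤ dist x c := dSet_le_dist hc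
    _ ≤ dist x y + dist y c := dist_triangle x y c
    _ = dist x y + dSet y C := by rw [dSet, dif_pos hC, hyc]

lemma sq_dSet_le_two_mul_add (x y : Pt d) {C : Finset (Pt d)} (hC : C.Nonempty) :
    dSet x C ^ 2 ≤ 2 * dist x y ^ 2 + 2 * dSet y C ^ 2 := by
  nlinarith [dSet_le_dist_add_dSet x y hC, dSet_nonneg x C, sq_nonneg (dist x y - dSet y C)]

lemma card_mul_sq_dSet_le (P : Finset (Pt d)) (a v : Pt d) {C : Finset (Pt d)}
    (hC : C.Nonempty) :
    P.card * dSet v C ^ 2 ≤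
      2 * P.card * dist v a ^ 2 + 4 * ∑ y ∈ P, dist y a ^ 2 + 4 * ∑ y ∈ P, dSet y C ^ 2 := by
  have hcentre : P.card * dSet a C ^ 2 ≤ ∑ y ∈ P, (2 * dist y a ^ 2 + 2 * dSet y C ^ 2) := by
    rw [← nsmul_eq_mul, ← sum_const]
    exact sum_le_sum fun y _ => by simpa only [dist_comm] using sq_dSet_le_two_mul_add a y hC
  rw [sum_add_distrib, ← mul_sum, ← mul_sum] at hcentre
  nlinarith [mul_le_mul_of_nonneg_left (sq_dSet_le_two_mul_add v a hC) (Nat.cast_nonneg P.card)]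

lemma kcost_val (X C : Finset (Pt d)) : kcost X.val C = ∑ x ∈ X, dSet x C ^ 2 := rfl

lemma kcost_nonneg (X : Multiset (Pt d)) (C : Finset (Pt d)) : 0 ≤ kcost X C :=
  Multiset.sum_nonneg fun _ h => by
    obtain ⟨x, -, rfl⟩ := Multiset.mem_map.mp h
    positivity

lemma kcost_pos {X C : Finset (Pt d)} (hC : C.Nonempty) (hXC : ¬X ⊆ C) : 0 < kcost X.val C := by
  obtain ⟨x, hx, hxC⟩ := not_subset.mp hXC
  rw [kcost_val]
  exact sum_pos' (fun _ _ => by positivity) ⟨x, hx, pow_pos (dSet_pos hC hxC) 2⟩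

lemma sum_sq_dSet_le_kcost {X P : Finset (Pt d)} (hP : P ⊆ X) (C : Finset (Pt d)) :
    ∑ y ∈ P, dSet y C ^ 2 ≤ kcost X.val C :=
  sum_le_sum_of_subset_of_nonneg hP fun _ _ _ => by positivity

lemma optCost_le_kcost {K : ℕ} (X : Multiset (Pt d)) {C : Finset (Pt d)} (hC : C.Nonempty)
    (hCK : C.card ≤ K) : optCost K X ≤ kcost X C :=
  csInf_le ⟨0, by rintro _ ⟨C', -, -, rfl⟩; exact kcost_nonneg X C'⟩ ⟨C, hC, hCK, rfl⟩

lemma sum_filter_sq_dist_le_kcost {X C : Finset (Pt d)} {assign : Pt d → Pt d}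
    (hassign : ∀ y ∈ X, dist y (assign y) = dSet y C) (a : Pt d) :
    ∑ y ∈ X.filter (fun y => assign y = a), dist y a ^ 2 ≤ kcost X.val C := by
  calc ∑ y ∈ X.filter (fun y => assign y = a), dist y a ^ 2
      = ∑ y ∈ X.filter (fun y => assign y = a), dSet y C ^ 2 := sum_congr rfl fun y hy => by
        obtain ⟨hyX, rfl⟩ := mem_filter.mp hy
        rw [hassign y hyX]
    _ ≤ kcost X.val C := sum_sq_dSet_le_kcost (filter_subset _ _) C

lemma card_mul_sq_dSet_le_of_not_outlier {X P C : Finset (Pt d)} (hP : P ⊆ X) (hC : C.Nonempty)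
    {a v : Pt d} {ε2 : ℝ} (hε2 : 1 ≤ ε2) (hPC : ∑ y ∈ P, dist y a ^ 2 ≤ kcost X.val C)
    (hv : dist v a ^ 2 * P.card ≤ ε2 * ∑ y ∈ P, dist y a ^ 2) :
    P.card * dSet v C ^ 2 ≤ 10 * ε2 * kcost X.val C := by
  have hP0 : 0 ≤ ∑ y ∈ P, dist y a ^ 2 := sum_nonneg fun _ _ => by positivity
  nlinarith [card_mul_sq_dSet_le P a v hC, sum_sq_dSet_le_kcost hP C,
    mul_le_mul_of_nonneg_left hPC (by linarith : (0 : ℝ) ≤ ε2)]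

lemma prefSet_snoc_castSucc {k : ℕ} (c : Fin k → Pt d) (v : Pt d) (j : Fin k) :
    prefSet (Fin.snoc c v : Fin (k + 1) → Pt d) j.castSucc = prefSet c j := by
  ext z
  simp only [prefSet, mem_image, mem_filter, mem_univ, true_and, Fin.exists_fin_succ',
    Fin.snoc_castSucc, Fin.castSucc_lt_castSucc_iff, Fin.snoc_last]
  exact or_iff_left fun h => (Fin.castSucc_lt_last j).not_gt h.1

lemma prefSet_snoc_last {k : ℕ} (c : Fin k → Pt d) (v : Pt d) :
    prefSet (Fin.snoc c v : Fin (k + 1) → Pt d) (Fin.last k) = univ.image c := by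
  ext z
  simp [prefSet, Fin.exists_fin_succ', Fin.castSucc_lt_last]

lemma stepProb_nonneg (X : Multiset (Pt d)) {k : ℕ} (c : Fin k → Pt d) (j : Fin k) :
    0 ≤ stepProb X c j := by
  unfold stepProb
  have := kcost_nonneg X (prefSet c j)
  split_ifs <;> positivity

lemma kmppProb_nonneg (X : Multiset (Pt d)) {k : ℕ} (c : Fin k → Pt d) : 0 ≤ kmppProb X c :=
  prod_nonneg fun j _ => stepProb_nonneg X c j

lemma kmppProb_snoc (X : Multiset (Pt d)) {k : ℕ} (c : Fin k → Pt d) (v : Pt d) :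
    kmppProb X (Fin.snoc c v : Fin (k + 1) → Pt d) =
      kmppProb X c * stepProb X (Fin.snoc c v : Fin (k + 1) → Pt d) (Fin.last k) := by
  rw [kmppProb, Fin.prod_univ_castSucc]
  congr 1
  refine prod_congr rfl fun j _ => ?_
  simp only [stepProb, prefSet_snoc_castSucc, Fin.snoc_castSucc, Fin.val_castSucc]

lemma stepProb_snoc_last_zero (X : Finset (Pt d)) (c : Fin 0 → Pt d) {v : Pt d} (hv : v ∈ X) :
    stepProb X.val (Fin.snoc c v : Fin 1 → Pt d) (Fin.last 0) = (X.card : ℝ)⁻¹ := by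
  rw [stepProb, Fin.snoc_last, Multiset.count_eq_one_of_mem X.nodup hv]
  simp

lemma stepProb_snoc_last {k : ℕ} (hk : 0 < k) (X : Finset (Pt d)) (c : Fin k → Pt d)
    {v : Pt d} (hv : v ∈ X) :
    stepProb X.val (Fin.snoc c v : Fin (k + 1) → Pt d) (Fin.last k) =
      dSet v (univ.image c) ^ 2 / kcost X.val (univ.image c) := by
  simp [stepProb, hk.ne', prefSet_snoc_last, Multiset.count_eq_one_of_mem X.nodup hv]

lemma image_nonempty_of_pos {k : ℕ} (hk : 0 < k) (c : Fin k → Pt d) : (univ.image c).Nonempty :=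
  ⟨c ⟨0, hk⟩, mem_image_of_mem c (mem_univ _)⟩

lemma kcost_image_pos {k : ℕ} (hk : 0 < k) {X : Finset (Pt d)} (hkX : k < X.card)
    (c : Fin k → Pt d) : 0 < kcost X.val (univ.image c) :=
  kcost_pos (image_nonempty_of_pos hk c) fun hX => by
    have := (card_le_card hX).trans card_image_le
    simp only [card_univ, Fintype.card_fin] at this
    omega

lemma sum_stepProb_snoc_last {k : ℕ} {X : Finset (Pt d)} (hkX : k < X.card) (c : Fin k → Pt d) :
    ∑ v ∈ X, stepProb X.val (Fin.snoc c v : Fin (k + 1) → Pt d) (Fin.last k) = 1 := by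
  rcases Nat.eq_zero_or_pos k with rfl | hk
  · rw [sum_congr rfl fun v hv => stepProb_snoc_last_zero X c hv, sum_const, nsmul_eq_mul]
    exact mul_inv_cancel₀ (by positivity)
  · rw [sum_congr rfl fun v hv => stepProb_snoc_last hk X c hv, ← sum_div, ← kcost_val]
    exact div_self (kcost_image_pos hk hkX c).ne'

lemma sum_tupleSupp_succ (X : Finset (Pt d)) (k : ℕ) (F : (Fin (k + 1) → Pt d) → ℝ) :
    ∑ c ∈ tupleSupp X (k + 1), F c = ∑ c ∈ tupleSupp X k, ∑ v ∈ X, F (Fin.snoc c v) := by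
  have h := filter_piFinset_eq_map_snocEquiv (fun _ : Fin (k + 1) => X) fun _ => True
  simp only [filter_true] at h
  rw [tupleSupp, h, sum_map, sum_product_right]
  rfl

lemma sum_kmppProb {X : Finset (Pt d)} {k : ℕ} (hk : k ≤ X.card) :
    ∑ c ∈ tupleSupp X k, kmppProb X.val c = 1 := by
  induction k with
  | zero => simp [tupleSupp, kmppProb]
  | succ k ih =>
    rw [sum_tupleSupp_succ, ← ih (by omega)]
    refine sum_congr rfl fun c _ => ?_
    simp only [kmppProb_snoc, ← mul_sum, sum_stepProb_snoc_last hk c, mul_one]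

lemma hit_snoc_le {k : ℕ} (S : Finset (Pt d)) (c : Fin k → Pt d) (v : Pt d) :
    (if ∃ j, (Fin.snoc c v : Fin (k + 1) → Pt d) j ∈ S then (1 : ℝ) else 0) ≤
      (if ∃ j, c j ∈ S then (1 : ℝ) else 0) + (if v ∈ S then (1 : ℝ) else 0) := by
  simp only [Fin.exists_fin_succ', Fin.snoc_castSucc, Fin.snoc_last]
  split_ifs <;> simp_all

lemma sum_snoc_hit_le {k : ℕ} {X S : Finset (Pt d)} (hS : S ⊆ X) (hkX : k < X.card)
    (c : Fin k → Pt d) {β : ℝ}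
    (hβ : ∀ v ∈ S, stepProb X.val (Fin.snoc c v : Fin (k + 1) → Pt d) (Fin.last k) ≤ β) :
    ∑ v ∈ X, kmppProb X.val (Fin.snoc c v : Fin (k + 1) → Pt d) *
        (if ∃ j, (Fin.snoc c v : Fin (k + 1) → Pt d) j ∈ S then (1 : ℝ) else 0) ≤
      kmppProb X.val c * (if ∃ j, c j ∈ S then (1 : ℝ) else 0) +
        kmppProb X.val c * (S.card * β) := by
  set step := fun v => stepProb X.val (Fin.snoc c v : Fin (k + 1) → Pt d) (Fin.last k)
  have hstep : ∑ v ∈ S, step v ≤ S.card * β := by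
    simpa only [sum_const, nsmul_eq_mul] using sum_le_sum hβ
  calc ∑ v ∈ X, kmppProb X.val (Fin.snoc c v : Fin (k + 1) → Pt d) *
          (if ∃ j, (Fin.snoc c v : Fin (k + 1) → Pt d) j ∈ S then (1 : ℝ) else 0)
      ≤ ∑ v ∈ X, (kmppProb X.val c * (if ∃ j, c j ∈ S then (1 : ℝ) else 0) * step v +
          kmppProb X.val c * (if v ∈ S then step v else 0)) := sum_le_sum fun v _ => by
        rw [kmppProb_snoc]
        have hp : 0 ≤ kmppProb X.val c * step v :=
          mul_nonneg (kmppProb_nonneg X.val c) (stepProb_nonneg X.val _ _)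
        have := mul_le_mul_of_nonneg_left (hit_snoc_le S c v) hp
        split_ifs at this ⊢ <;> linarith
    _ = kmppProb X.val c * (if ∃ j, c j ∈ S then (1 : ℝ) else 0) +
          kmppProb X.val c * ∑ v ∈ S, step v := by
        rw [sum_add_distrib, ← mul_sum, ← mul_sum, sum_stepProb_snoc_last hkX c, mul_one,
          sum_ite_mem, inter_eq_right.mpr hS]
    _ ≤ _ := by gcongr; exact kmppProb_nonneg X.val c

lemma sum_kmppProb_hit_le {X S : Finset (Pt d)} (hS : S ⊆ X) (b : ℕ → ℝ) {K : ℕ}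
    (hK : K ≤ X.card)
    (hb : ∀ k < K, ∀ c : Fin k → Pt d,
      ∀ v ∈ S, stepProb X.val (Fin.snoc c v : Fin (k + 1) → Pt d) (Fin.last k) ≤ b k) :
    ∑ c ∈ tupleSupp X K, kmppProb X.val c * (if ∃ j, c j ∈ S then (1 : ℝ) else 0) ≤
      S.card * ∑ k ∈ range K, b k := by
  induction K with
  | zero => simp [tupleSupp, kmppProb]
  | succ K ih =>
    calc ∑ c ∈ tupleSupp X (K + 1), kmppProb X.val c * (if ∃ j, c j ∈ S then (1 : ℝ) else 0)
        ≤ ∑ c ∈ tupleSupp X K, (kmppProb X.val c * (if ∃ j, c j ∈ S then (1 : ℝ) else 0) +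
            kmppProb X.val c * (S.card * b K)) := by
          rw [sum_tupleSupp_succ]
          exact sum_le_sum fun c _ => sum_snoc_hit_le hS hK c (hb K K.lt_succ_self c)
      _ ≤ S.card * ∑ k ∈ range K, b k + S.card * b K := by
          rw [sum_add_distrib, ← sum_mul, sum_kmppProb (by omega), one_mul]
          gcongr
          exact ih (by omega) fun k hk => hb k (by omega)
      _ = S.card * ∑ k ∈ range (K + 1), b k := by rw [sum_range_succ, mul_add]

lemma stepProb_snoc_last_le_of_not_outlier {K k : ℕ} (hk : 0 < k) (hkK : k ≤ K)
    {X P : Finset (Pt d)} (hkX : k < X.card) (hP : P ⊆ X) {a v : Pt d} (hv : v ∈ X)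
    {ε1 ε2 : ℝ} (hε1 : 0 < ε1) (hε2 : 1 ≤ ε2)
    (hPopt : ∑ y ∈ P, dist y a ^ 2 ≤ optCost K X.val)
    (hout : dist v a ^ 2 * P.card ≤ ε2 * ∑ y ∈ P, dist y a ^ 2)
    (hlarge : (X.card : ℝ) / (K * ε1) ≤ P.card) (c : Fin k → Pt d) :
    stepProb X.val (Fin.snoc c v : Fin (k + 1) → Pt d) (Fin.last k) ≤
      10 * ε2 * K * ε1 / X.card := by
  set C := univ.image c
  have hC : C.Nonempty := image_nonempty_of_pos hk c
  have hφ : 0 < kcost X.val C := kcost_image_pos hk hkX c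
  have hCK : C.card ≤ K := card_image_le.trans (by simpa using hkK)
  have hcluster : P.card * dSet v C ^ 2 ≤ 10 * ε2 * kcost X.val C :=
    card_mul_sq_dSet_le_of_not_outlier hP hC hε2
      (hPopt.trans (optCost_le_kcost X.val hC hCK)) hout
  have hKε1 : (0 : ℝ) < K * ε1 := mul_pos (by exact_mod_cast hk.trans_le hkK) hε1
  have hn : (X.card : ℝ) ≤ P.card * (K * ε1) := (div_le_iff₀ hKε1).mp hlarge
  rw [stepProb_snoc_last hk X c hv, div_le_div_iff₀ hφ (by exact_mod_cast hk.trans hkX)]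
  nlinarith [mul_le_mul_of_nonneg_left hn (sq_nonneg (dSet v C)),
    mul_le_mul_of_nonneg_right hcluster hKε1.le]

lemma sum_range_ite_zero {K : ℕ} (hK : 1 ≤ K) (α β : ℝ) :
    ∑ k ∈ range K, (if k = 0 then α else β) = α + (K - 1) * β := by
  obtain ⟨K, rfl⟩ := Nat.exists_eq_add_of_le' hK
  simp [sum_range_succ', add_comm]

theorem retraining_probability_adversarial_removal_general {d K : ℕ} (hK : 1 ≤ K)
    (X : Finset (Pt d)) (hKn : K ≤ X.card)
    (ε1 ε2 : ℝ) (hε1 : 0 < ε1) (hε2 : 1 ≤ ε2)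
    (Cstar : Finset (Pt d))
    (hCopt : kcost X.val Cstar = optCost K X.val)
    (astar : Pt d → Pt d)
    (hastar : ∀ y ∈ X, astar y ∈ Cstar ∧ dist y (astar y) = dSet y Cstar)
    (XR : Finset (Pt d)) (hXR : XR ⊆ X) (R : ℕ) (hRcard : XR.card = R)
    (hout : ∀ x ∈ XR,
      dist x (astar x) ^ 2 * ((X.filter fun y => astar y = astar x).card : ℝ)
        ≤ ε2 * ∑ y ∈ X.filter (fun y => astar y = astar x), dist y (astar x) ^ 2)
    (hP1 : ∀ x ∈ XR,
      (X.card : ℝ) / (K * ε1) ≤ ((X.filter fun y => astar y = astar x).card : ℝ)) :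
    ∑ C ∈ tupleSupp X K,
        kmppProb X.val C * (if ∃ j, C j ∈ XR then (1 : ℝ) else 0)
      ≤ R * (1 + 20 * K * ((K : ℝ) - 1) * ε1 * ε2) / X.card := by
  have hstep : ∀ k < K, ∀ c : Fin k → Pt d, ∀ v ∈ XR,
      stepProb X.val (Fin.snoc c v : Fin (k + 1) → Pt d) (Fin.last k) ≤
        if k = 0 then (X.card : ℝ)⁻¹ else 10 * ε2 * K * ε1 / X.card := by
    rintro k hk c v hv
    rcases Nat.eq_zero_or_pos k with rfl | hk0
    · exact (stepProb_snoc_last_zero X c (hXR hv)).le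
    · rw [if_neg hk0.ne']
      refine stepProb_snoc_last_le_of_not_outlier hk0 hk.le (hk.trans_le hKn)
        (filter_subset _ X) (hXR hv) hε1 hε2 ?_ (hout v hv) (hP1 v hv) c
      exact hCopt ▸ sum_filter_sq_dist_le_kcost (fun y hy => (hastar y hy).2) (astar v)
  calc _ ≤ XR.card * ∑ k ∈ range K,
          (if k = 0 then (X.card : ℝ)⁻¹ else 10 * ε2 * K * ε1 / X.card) :=
        sum_kmppProb_hit_le hXR _ hKn hstep
    _ = R * (1 + 10 * K * (K - 1) * ε1 * ε2) / X.card := by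
        rw [sum_range_ite_zero hK, hRcard]
        field_simp
    _ ≤ R * (1 + 20 * K * ((K : ℝ) - 1) * ε1 * ε2) / X.card := by
        gcongr
        · exact sub_nonneg.mpr (Nat.one_le_cast.mpr hK)
        · norm_num

/-- retraining probability, adversarial removal.  Let `X_R ⊆ X` consist
of `R` points, each of which is not an `ε2`-outlier and whose optimal cluster `P_x`
satisfies `|P_x| ≥ 2` and `|P_x| ≥ n/(K ε1)`.  If `C` is the random centroid set produced
by K-means++ initialization with parameter `K` on `X`, then
`P(X_R ∩ C ≠ ∅) ≤ R (1 + 20 K (K−1) ε1 ε2)/n`. -/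
theorem retraining_probability_adversarial_removal {d K : ℕ} (hK : 1 ≤ K)
    (X : Finset (Pt d)) (hKn : K ≤ X.card)
    (ε1 ε2 : ℝ) (hε1 : 0 < ε1) (hε2 : 1 ≤ ε2)
    (Cstar : Finset (Pt d)) (hCne : Cstar.Nonempty) (hCcard : Cstar.card ≤ K)
    (hCopt : kcost X.val Cstar = optCost K X.val)
    (astar : Pt d → Pt d)
    (hastar : ∀ y ∈ X, astar y ∈ Cstar ∧ dist y (astar y) = dSet y Cstar)
    (XR : Finset (Pt d)) (hXR : XR ⊆ X) (R : ℕ) (hRcard : XR.card = R)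
    (hout : ∀ x ∈ XR,
      dist x (astar x) ^ 2 * ((X.filter fun y => astar y = astar x).card : ℝ)
        ≤ ε2 * ∑ y ∈ X.filter (fun y => astar y = astar x), dist y (astar x) ^ 2)
    (hP2 : ∀ x ∈ XR, 2 ≤ (X.filter fun y => astar y = astar x).card)
    (hP1 : ∀ x ∈ XR,
      (X.card : ℝ) / (K * ε1) ≤ ((X.filter fun y => astar y = astar x).card : ℝ)) :
    ∑ C ∈ tupleSupp X K,
        kmppProb X.val C * (if ∃ j, C j ∈ XR then (1 : ℝ) else 0)
      ≤ R * (1 + 20 * K * ((K : ℝ) - 1) * ε1 * ε2) / X.card :=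
  retraining_probability_adversarial_removal_general hK X hKn ε1 ε2 hε1 hε2 Cstar hCopt astar hastar
    XR hXR R hRcard hout hP1
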